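/- arXiv:1010.0011 — 2 statements merged into one kernel-verified Lean document; each statement's English description precedes it below -/
import Mathlib

section
/- The coherence of the K × N matrix A of Construction 1′ equals 1/√K; that is, |a_{n_1}^H · a_{n_2}| ≤ 1/√K for all distinct column indices n_1 ≠ n_2, and this bound is attained by some pair of distinct columns. -/
open Complex Finset

/-- The canonical additive character of a finite field `F` of characteristic `p`:
`χ(y) = exp(2πi · Tr(y) / p) = ω_p^{Tr(y)}`, where `Tr : F → F_p` is the field trace. -/
noncomputable def addChar (p : ℕ) {F : Type*} [Field F] [Fintype F] [Algebra (ZMod p) F]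
    (y : F) : ℂ :=
  Complex.exp (2 * Real.pi * Complex.I * ((Algebra.trace (ZMod p) F y).val : ℂ) / p)

/-- `b_i` associated to the digit `u_i`: `b = 0` if `u = 0`, and `b = α^(u-1)` if `u ≥ 1`. -/
noncomputable def bOf {F : Type*} [Field F] (α : F) (u : ℕ) : F :=
  if u = 0 then 0 else α ^ (u - 1)

/-!
Column `n = u₁ + u₂ K` carries the pair `(b₁, b₂) ∈ F²`, and `k ↦ b(k)` is a bijection from the
rows onto `F` because `α` generates `Fˣ`. Writing `ψ = ω_p^{Tr(·)}`, which is a primitive additive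
character of `F`, and reindexing the rows by `x = b(k)`, the inner product of columns `n₁, n₂`
becomes `K⁻¹ ∑ₓ ψ(Δb₂ x² + Δb₁ x)`. If `Δb₂ ≠ 0` this quadratic Weil sum has absolute value `√K`:
in `|S|²` the substitution `x = y + d` makes the phase linear in `y` with slope `2 Δb₂ d`, so only
`d = 0` survives since `p` is odd. If `Δb₂ = 0 ≠ Δb₁` the sum vanishes. Columns `0` and `K` differ
only in `b₂`, so the bound is attained.
-/

section TraceChar

variable (p : ℕ) (F : Type*) [Field F] [Fintype F] [Algebra (ZMod p) F]

noncomputable def traceChar [NeZero p] : AddChar F ℂ :=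
  ZMod.stdAddChar.compAddMonoidHom (Algebra.trace (ZMod p) F).toAddMonoidHom

theorem ringChar_ne_two_of_odd [Fact p.Prime] (hodd : Odd p) : ringChar F ≠ 2 := by
  have : CharP F p := charP_of_injective_algebraMap' (ZMod p) p
  rw [ringChar.eq F p]
  rintro rfl
  exact Nat.not_odd_iff_even.mpr even_two hodd

variable {F}

theorem traceChar_apply [NeZero p] (y : F) : traceChar p F y = addChar p y := by
  simp [traceChar, addChar, ZMod.stdAddChar_apply, ZMod.toCircle_apply]

theorem isPrimitive_traceChar [Fact p.Prime] : (traceChar p F).IsPrimitive := by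
  refine AddChar.IsPrimitive.of_ne_one (AddChar.ne_one_iff.mpr ?_)
  obtain ⟨y, hy⟩ := Algebra.trace_surjective (ZMod p) F 1
  refine ⟨y, ?_⟩
  rw [traceChar, AddChar.compAddMonoidHom_apply, LinearMap.toAddMonoidHom_coe, hy,
    ← (ZMod.stdAddChar (N := p)).map_zero_eq_one, ZMod.injective_stdAddChar.ne_iff]
  exact one_ne_zero

theorem ite_eq_mul_traceChar_bOf [NeZero p] (α u v : F) (k : ℕ) (c : ℂ) :
    (if k = 0 then c else c * addChar p (u * α ^ (k - 1) + v * α ^ (2 * (k - 1)))) =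
      c * traceChar p F (u * bOf α k + v * bOf α k ^ 2) := by
  rcases k with _ | k
  · simp [bOf]
  · simp [bOf, traceChar_apply, pow_mul']

end TraceChar

open ComplexConjugate

namespace AddChar

variable {G F 𝕜 : Type*} [RCLike 𝕜]

theorem norm_sum_conj_mul_comp [AddCommGroup G] [Fintype G] {ι : Type*} [Fintype ι]
    (ψ : AddChar G 𝕜) (c : 𝕜) {e : ι → G} (he : Function.Bijective e) (f g : G → G) :
    ‖∑ i, conj (c * ψ (f (e i))) * (c * ψ (g (e i)))‖ = ‖c‖ ^ 2 * ‖∑ x, ψ (g x - f x)‖ := by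
  have hterm : ∀ y, conj (c * ψ (f y)) * (c * ψ (g y)) = conj c * c * ψ (g y - f y) := by
    intro y
    rw [map_mul, ← map_neg_eq_conj, sub_eq_neg_add, map_add_eq_mul]
    ring
  simp_rw [hterm]
  rw [← Finset.mul_sum, he.sum_comp fun x => ψ (g x - f x), norm_mul, RCLike.conj_mul,
    ← RCLike.ofReal_pow, RCLike.norm_ofReal, abs_pow, abs_norm]

variable [Field F] [Fintype F] {ψ : AddChar F 𝕜}

theorem norm_sum_quadratic_sq (hψ : ψ.IsPrimitive) (h2 : ringChar F ≠ 2) {a : F} (ha : a ≠ 0)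
    (b : F) : ‖∑ x, ψ (a * x ^ 2 + b * x)‖ ^ 2 = Fintype.card F := by
  classical
  set f : F → F := fun x => a * x ^ 2 + b * x with hf
  have hshift : ∀ y d, f (y + d) - f y = f d + y * (2 * a * d) := fun y d => by simp only [hf]; ring
  suffices h : ((‖∑ x, ψ (f x)‖ ^ 2 : ℝ) : 𝕜) = Fintype.card F by exact_mod_cast h
  calc ((‖∑ x, ψ (f x)‖ ^ 2 : ℝ) : 𝕜)
      = ∑ y, ∑ x, conj (ψ (f y)) * ψ (f x) := by
        rw [RCLike.ofReal_pow, ← RCLike.conj_mul, map_sum, Finset.sum_mul_sum]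
    _ = ∑ y, ∑ d, ψ (f d) * ψ (y * (2 * a * d)) := by
        refine Finset.sum_congr rfl fun y _ => ?_
        rw [← Equiv.sum_comp (Equiv.addLeft y)]
        refine Finset.sum_congr rfl fun d _ => ?_
        rw [← map_neg_eq_conj, ← map_add_eq_mul, Equiv.coe_addLeft, neg_add_eq_sub, hshift,
          map_add_eq_mul]
    _ = ∑ d, ψ (f d) * ∑ y, ψ (y * (2 * a * d)) := by
        rw [Finset.sum_comm]
        simp_rw [Finset.mul_sum]
    _ = Fintype.card F := by
        simp_rw [sum_mulShift _ hψ, mul_eq_zero, Ring.two_ne_zero h2, ha, false_or]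
        simp [hf]

theorem norm_sum_quadratic (hψ : ψ.IsPrimitive) (h2 : ringChar F ≠ 2) {a : F} (ha : a ≠ 0)
    (b : F) : ‖∑ x, ψ (a * x ^ 2 + b * x)‖ = √(Fintype.card F) := by
  rw [← norm_sum_quadratic_sq hψ h2 ha, Real.sqrt_sq (norm_nonneg _)]

theorem norm_sum_quadratic_le (hψ : ψ.IsPrimitive) (h2 : ringChar F ≠ 2) {a b : F}
    (hab : a ≠ 0 ∨ b ≠ 0) : ‖∑ x, ψ (a * x ^ 2 + b * x)‖ ≤ √(Fintype.card F) := by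
  classical
  by_cases ha : a = 0
  · have hb : b ≠ 0 := hab.resolve_left (not_not.mpr ha)
    simp_rw [ha, zero_mul, zero_add, mul_comm b]
    rw [sum_mulShift _ hψ, if_neg hb, Nat.cast_zero, norm_zero]
    positivity
  · exact (norm_sum_quadratic hψ h2 ha b).le

end AddChar

section bOf

variable {F : Type*} [Field F] [Fintype F] {α : F}

theorem surjective_bOf (hα : ∀ x : F, x ≠ 0 → ∃ j : ℕ, α ^ j = x) :
    Function.Surjective fun k : Fin (Fintype.card F) => bOf α k := by
  have hq : 1 < Fintype.card F := Fintype.one_lt_card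
  intro x
  by_cases hx : x = 0
  · exact ⟨⟨0, by omega⟩, by simp [bOf, hx]⟩
  obtain ⟨j, rfl⟩ := hα x hx
  obtain ⟨i, hi, hij⟩ : ∃ i < Fintype.card F - 1, α ^ i = α ^ j := by
    rcases eq_or_ne α 0 with hα0 | hα0
    · rcases j with _ | j
      · exact ⟨0, by omega, rfl⟩
      · simp [hα0] at hx
    · exact ⟨j % (Fintype.card F - 1), Nat.mod_lt _ (by omega),
        (pow_eq_pow_mod j (FiniteField.pow_card_sub_one_eq_one α hα0)).symm⟩
  exact ⟨⟨i + 1, by omega⟩, by simp [bOf, hij]⟩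

theorem bijective_bOf (hα : ∀ x : F, x ≠ 0 → ∃ j : ℕ, α ^ j = x) :
    Function.Bijective fun k : Fin (Fintype.card F) => bOf α k :=
  (Fintype.bijective_iff_surjective_and_card _).mpr ⟨surjective_bOf hα, by simp⟩

theorem injOn_bOf_mod_div (hα : ∀ x : F, x ≠ 0 → ∃ j : ℕ, α ^ j = x) :
    Set.InjOn (fun n => (bOf α (n % Fintype.card F), bOf α (n / Fintype.card F)))
      (Set.Iio (Fintype.card F ^ 2)) := by
  set q := Fintype.card F
  have hq : 0 < q := Fintype.card_pos
  have hinj : Set.InjOn (bOf α) (Set.Iio q) := fun u hu v hv h =>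
    congrArg Fin.val ((bijective_bOf hα).injective (a₁ := ⟨u, hu⟩) (a₂ := ⟨v, hv⟩) h)
  intro n₁ h₁ n₂ h₂ h
  have hdiv : ∀ n ∈ Set.Iio (q ^ 2), n / q ∈ Set.Iio q := fun n hn =>
    Nat.div_lt_of_lt_mul (by rw [← sq]; exact hn)
  obtain ⟨hmod, hquot⟩ := Prod.ext_iff.mp h
  rw [← Nat.mod_add_div n₁ q, ← Nat.mod_add_div n₂ q,
    hinj (Nat.mod_lt _ hq) (Nat.mod_lt _ hq) hmod, hinj (hdiv _ h₁) (hdiv _ h₂) hquot]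

end bOf

section Construction1Prime

variable (p : ℕ) [NeZero p] {F : Type*} [Field F] [Fintype F] [Algebra (ZMod p) F]

noncomputable def construction1PrimeMatrix (α : F) (K N : ℕ) : Matrix (Fin K) (Fin N) ℂ :=
  Matrix.of fun k n =>
    if (k : ℕ) = 0 then ((Real.sqrt K : ℂ))⁻¹
    else ((Real.sqrt K : ℂ))⁻¹ * addChar p (bOf α ((n : ℕ) % K) * α ^ ((k : ℕ) - 1) +
      bOf α ((n : ℕ) / K) * α ^ (2 * ((k : ℕ) - 1)))

theorem norm_gram_construction1PrimeMatrix {α : F} {K N : ℕ}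
    (hbij : Function.Bijective fun k : Fin K => bOf α k) (n₁ n₂ : Fin N) :
    ‖∑ k, conj (construction1PrimeMatrix p α K N k n₁) * construction1PrimeMatrix p α K N k n₂‖ =
      (√K)⁻¹ ^ 2 * ‖∑ x, traceChar p F ((bOf α (n₂ / K) - bOf α (n₁ / K)) * x ^ 2 +
        (bOf α (n₂ % K) - bOf α (n₁ % K)) * x)‖ := by
  simp only [construction1PrimeMatrix, Matrix.of_apply, ite_eq_mul_traceChar_bOf]
  rw [AddChar.norm_sum_conj_mul_comp _ _ hbij
      (fun y => bOf α (n₁ % K) * y + bOf α (n₁ / K) * y ^ 2)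
      (fun y => bOf α (n₂ % K) * y + bOf α (n₂ / K) * y ^ 2),
    norm_inv, Complex.norm_real, Real.norm_of_nonneg (Real.sqrt_nonneg _)]
  congr 3 with x
  congr 1
  ring

end Construction1Prime

theorem construction1prime_coherence_general
    (p m : ℕ) [Fact p.Prime] (hodd : Odd p)
    (K N : ℕ) (hK : K = p ^ m) (hN : N = K ^ 2)
    (F : Type*) [Field F] [Fintype F] [Algebra (ZMod p) F]
    (hcard : Fintype.card F = p ^ m)
    (α : F) (hα : ∀ x : F, x ≠ 0 → ∃ j : ℕ, α ^ j = x)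
    (A : Matrix (Fin K) (Fin N) ℂ)
    (hA : ∀ (k : Fin K) (n : Fin N), A k n =
      if (k : ℕ) = 0 then ((Real.sqrt K : ℂ))⁻¹
      else ((Real.sqrt K : ℂ))⁻¹ * addChar p (bOf α ((n : ℕ) % K) * α ^ ((k : ℕ) - 1) +
        bOf α ((n : ℕ) / K) * α ^ (2 * ((k : ℕ) - 1))))
    :
    (∀ n₁ n₂ : Fin N, n₁ ≠ n₂ →
      ‖∑ k : Fin K, (starRingEnd ℂ) (A k n₁) * A k n₂‖ ≤ 1 / Real.sqrt K) ∧
    (∃ n₁ n₂ : Fin N, n₁ ≠ n₂ ∧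
      ‖∑ k : Fin K, (starRingEnd ℂ) (A k n₁) * A k n₂‖ = 1 / Real.sqrt K) := by
  have hKF : Fintype.card F = K := hcard.trans hK.symm
  have hK1 : 1 < K := hKF ▸ Fintype.one_lt_card
  have hbij : Function.Bijective fun k : Fin K => bOf α k := by
    subst hKF; exact bijective_bOf hα
  have hcol : Set.InjOn (fun n => (bOf α (n % K), bOf α (n / K))) (Set.Iio N) := by
    subst hKF hN; exact injOn_bOf_mod_div hα
  have h2 := ringChar_ne_two_of_odd p F hodd
  have hψ := isPrimitive_traceChar p (F := F)
  have hscale : (√K)⁻¹ ^ 2 * √K = 1 / √K := by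
    have : 0 < √(K : ℝ) := Real.sqrt_pos.mpr (by positivity)
    field_simp
  obtain rfl : A = construction1PrimeMatrix p α K N := Matrix.ext hA
  refine ⟨fun n₁ n₂ hne => ?_, ⟨0, by rw [hN]; positivity⟩, ⟨K, by rw [hN]; nlinarith⟩,
    Fin.ne_of_val_ne (by dsimp only; omega), ?_⟩
  · rw [norm_gram_construction1PrimeMatrix p hbij, ← hscale]
    gcongr
    refine (AddChar.norm_sum_quadratic_le hψ h2 ?_).trans_eq (by rw [hKF])
    by_contra! h
    exact hne (Fin.ext (hcol n₁.2 n₂.2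
      (Prod.ext (sub_eq_zero.mp h.2).symm (sub_eq_zero.mp h.1).symm)))
  · rw [norm_gram_construction1PrimeMatrix p hbij, ← hscale,
      AddChar.norm_sum_quadratic hψ h2 ?_, hKF]
    simp [bOf, Nat.div_self (by omega : 0 < K)]

/-- The coherence of the Construction 1′ matrix equals `1/√K`: every pair of distinct
columns has inner product of magnitude at most `1/√K`, and this value is attained. -/
theorem construction1prime_coherence
    (p m : ℕ) [Fact p.Prime] (hodd : Odd p) (hm : 0 < m)
    (K N : ℕ) (hK : K = p ^ m) (hN : N = K ^ 2)
    (F : Type*) [Field F] [Fintype F] [Algebra (ZMod p) F]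
    (hcard : Fintype.card F = p ^ m)
    (α : F) (hα : ∀ x : F, x ≠ 0 → ∃ j : ℕ, α ^ j = x)
    (A : Matrix (Fin K) (Fin N) ℂ)
    (hA : ∀ (k : Fin K) (n : Fin N), A k n =
      if (k : ℕ) = 0 then ((Real.sqrt K : ℂ))⁻¹
      else ((Real.sqrt K : ℂ))⁻¹ * addChar p (bOf α ((n : ℕ) % K) * α ^ ((k : ℕ) - 1) +
        bOf α ((n : ℕ) / K) * α ^ (2 * ((k : ℕ) - 1))))
    :
    (∀ n₁ n₂ : Fin N, n₁ ≠ n₂ →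
      ‖∑ k : Fin K, (starRingEnd ℂ) (A k n₁) * A k n₂‖ ≤ 1 / Real.sqrt K) ∧
    (∃ n₁ n₂ : Fin N, n₁ ≠ n₂ ∧
      ‖∑ k : Fin K, (starRingEnd ℂ) (A k n₁) * A k n₂‖ = 1 / Real.sqrt K) :=
  construction1prime_coherence_general p m hodd K N hK hN F hcard α hα A hA
end

section
/- The K × N matrix A of Construction 1′ satisfies A A^H = K · I_K, where A^H is the conjugate transpose of A and I_K is the K × K identity matrix; that is, A is a tight frame with redundancy ρ = ‖A‖² = N/K = K. -/
/-!
Index the rows by `β = b_k ∈ F` and the columns by `(x, y) = (b_{u₁}, b_{u₂}) ∈ F × F`; both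
indexings are bijective because `α` generates `Fˣ`. Then `√K · A_{k,n} = ψ(xβ + yβ²)` for the
primitive character `ψ = ω_p^{Tr(·)}`, so
`(A Aᴴ)_{β,β'} = K⁻¹ (∑ₓ ψ(x(β - β'))) (∑_y ψ(y(β² - β'²)))`, and the first sum vanishes unless
`β = β'`. The norm then comes from the C⋆-identity `‖A‖² = ‖A Aᴴ‖`.
-/

open Complex Finset

open scoped Matrix

section TraceChar

variable (p : ℕ) [Fact p.Prime] (F : Type*) [Field F] [Fintype F] [Algebra (ZMod p) F]

noncomputable def traceAddChar : AddChar F ℂ :=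
  ZMod.stdAddChar.compAddMonoidHom (Algebra.trace (ZMod p) F).toAddMonoidHom

variable {F} in
lemma traceAddChar_apply (y : F) : traceAddChar p F y = addChar p y := by
  simp [traceAddChar, addChar, ZMod.stdAddChar_apply, ZMod.toCircle_apply]

lemma isPrimitive_traceAddChar : (traceAddChar p F).IsPrimitive := by
  refine AddChar.IsPrimitive.of_ne_one fun h => ?_
  obtain ⟨y, hy⟩ := Algebra.trace_surjective (ZMod p) F 1
  have h1 : ZMod.stdAddChar (1 : ZMod p) = ZMod.stdAddChar (0 : ZMod p) := by
    rw [AddChar.map_zero_eq_one, ← hy]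
    exact DFunLike.congr_fun h y
  exact one_ne_zero (ZMod.injective_stdAddChar h1)

end TraceChar

section QuadraticCharMatrix

variable {R : Type*} [CommRing R] [Fintype R] [DecidableEq R]

def quadraticCharMatrix (ψ : AddChar R ℂ) : Matrix R (R × R) ℂ :=
  Matrix.of fun β xy => ψ (xy.1 * β + xy.2 * β ^ 2)

lemma quadraticCharMatrix_mul_conjTranspose {ψ : AddChar R ℂ} (hψ : ψ.IsPrimitive) :
    quadraticCharMatrix ψ * (quadraticCharMatrix ψ)ᴴ = ((Fintype.card R ^ 2 : ℕ) : ℂ) • 1 := by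
  have hchar : 0 < ringChar R := Nat.pos_of_ne_zero (CharP.char_ne_zero_of_finite R _)
  ext β β'
  have hentry : ∀ xy : R × R, quadraticCharMatrix ψ β xy * star (quadraticCharMatrix ψ β' xy) =
      ψ (xy.1 * (β - β')) * ψ (xy.2 * (β ^ 2 - β' ^ 2)) := by
    intro xy
    rw [quadraticCharMatrix, Matrix.of_apply, Matrix.of_apply, RCLike.star_def,
      AddChar.starComp_apply hchar, AddChar.inv_apply, ← AddChar.map_add_eq_mul,
      ← AddChar.map_add_eq_mul]
    ring_nf
  simp only [Matrix.mul_apply, Matrix.conjTranspose_apply, hentry, Fintype.sum_prod_type,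
    ← Finset.sum_mul_sum, AddChar.sum_mulShift _ hψ, Matrix.smul_apply, Matrix.one_apply]
  by_cases h : β = β'
  · subst h
    simp [sq]
  · simp [sub_eq_zero, h]

end QuadraticCharMatrix

open scoped Matrix.Norms.L2Operator in
lemma Matrix.l2_opNorm_sq_eq_of_mul_conjTranspose_eq_smul_one {m n 𝕜 : Type*} [RCLike 𝕜]
    [Fintype m] [Fintype n] [DecidableEq m] [DecidableEq n] [Nonempty m] {A : Matrix m n 𝕜}
    {c : ℝ} (hc : 0 ≤ c) (hA : A * Aᴴ = (c : 𝕜) • 1) : ‖A‖ ^ 2 = c := by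
  rw [sq, ← Matrix.l2_opNorm_conjTranspose, ← Matrix.l2_opNorm_conjTranspose_mul_self,
    Matrix.conjTranspose_conjTranspose, hA, norm_smul, norm_one, mul_one, RCLike.norm_ofReal,
    abs_of_nonneg hc]

lemma bOf_bijective {F : Type*} [Field F] [Fintype F] {K : ℕ} (hcard : Fintype.card F = K)
    {α : F} (hα : ∀ x : F, x ≠ 0 → ∃ j : ℕ, α ^ j = x) :
    Function.Bijective fun u : Fin K => bOf α u := by
  refine (Fintype.bijective_iff_surjective_and_card _).2 ⟨fun x => ?_, by simp [hcard]⟩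
  have hK : 1 < K := hcard ▸ Fintype.one_lt_card
  by_cases hx : x = 0
  · exact ⟨⟨0, by omega⟩, by simp [bOf, hx]⟩
  obtain ⟨j, rfl⟩ := hα x hx
  have hjmod : α ^ j = α ^ (j % (K - 1)) := by
    rcases eq_or_ne α 0 with rfl | hα0
    · obtain rfl : j = 0 := by by_contra hj; exact hx (zero_pow hj)
      simp
    · exact pow_eq_pow_mod j (hcard ▸ FiniteField.pow_card_sub_one_eq_one α hα0)
  refine ⟨⟨j % (K - 1) + 1, by have := Nat.mod_lt j (show 0 < K - 1 by omega); omega⟩, ?_⟩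
  simp [bOf, hjmod]

open scoped Matrix.Norms.L2Operator in
theorem construction1prime_tight_frame_general
    (p m : ℕ) [Fact p.Prime]
    (K N : ℕ) (hK : K = p ^ m) (hN : N = K ^ 2)
    (F : Type*) [Field F] [Fintype F] [Algebra (ZMod p) F]
    (hcard : Fintype.card F = p ^ m)
    (α : F) (hα : ∀ x : F, x ≠ 0 → ∃ j : ℕ, α ^ j = x)
    (A : Matrix (Fin K) (Fin N) ℂ)
    (hA : ∀ (k : Fin K) (n : Fin N), A k n =
      if (k : ℕ) = 0 then ((Real.sqrt K : ℂ))⁻¹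
      else ((Real.sqrt K : ℂ))⁻¹ * addChar p (bOf α ((n : ℕ) % K) * α ^ ((k : ℕ) - 1) +
        bOf α ((n : ℕ) / K) * α ^ (2 * ((k : ℕ) - 1))))
    :
    A * A.conjTranspose = (K : ℂ) • (1 : Matrix (Fin K) (Fin K) ℂ) ∧
      ‖A‖ ^ 2 = (K : ℝ) := by
  classical
  obtain rfl : N = K * K := hN.trans (sq K)
  have hcardK : Fintype.card F = K := hcard.trans hK.symm
  set row : Fin K → F := fun k => bOf α k
  have hrow : row.Bijective := bOf_bijective hcardK hα
  -- `finProdFinEquiv.symm n = (u₂, u₁)` for `n = u₁ + u₂ K`, whence the swap below.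
  set col : Fin (K * K) → F × F := fun n => (row n.modNat, row n.divNat)
  have hcol : col.Bijective :=
    (hrow.prodMap hrow).comp (Prod.swap_bijective.comp finProdFinEquiv.symm.bijective)
  have hA' : A = ((Real.sqrt K : ℂ))⁻¹ •
      (quadraticCharMatrix (traceAddChar p F)).submatrix row col := by
    ext k n
    simp only [hA, ← traceAddChar_apply, Matrix.smul_apply, Matrix.submatrix_apply,
      quadraticCharMatrix, Matrix.of_apply, smul_eq_mul, col, row, Fin.coe_modNat, Fin.coe_divNat]
    split_ifs with hk
    · simp [bOf, hk]
    · simp [bOf, hk, pow_mul']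
  have hscale : ((Real.sqrt K : ℂ))⁻¹ * star ((Real.sqrt K : ℂ))⁻¹ *
      ((Fintype.card F ^ 2 : ℕ) : ℂ) = K := by
    simp [hcardK, ← Complex.ofReal_mul, ← mul_inv]
    field_simp
  have hAA : A * Aᴴ = (K : ℂ) • 1 := by
    rw [hA', Matrix.conjTranspose_smul, Matrix.smul_mul, Matrix.mul_smul, smul_smul,
      Matrix.conjTranspose_submatrix, ← Matrix.submatrix_mul _ _ _ _ _ hcol,
      quadraticCharMatrix_mul_conjTranspose (isPrimitive_traceAddChar p F),
      Matrix.submatrix_smul, Pi.smul_apply, Pi.smul_apply, Matrix.submatrix_one _ hrow.injective,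
      smul_smul, hscale]
  have : Nonempty (Fin K) := ⟨⟨0, hcardK ▸ Fintype.card_pos⟩⟩
  exact ⟨hAA, Matrix.l2_opNorm_sq_eq_of_mul_conjTranspose_eq_smul_one (Nat.cast_nonneg K) hAA⟩

open scoped Matrix.Norms.L2Operator in
/-- The Construction 1′ matrix satisfies `A Aᴴ = K·I_K`: it is a tight frame with
redundancy `ρ = ‖A‖² = N/K = K`. -/
theorem construction1prime_tight_frame
    (p m : ℕ) [Fact p.Prime] (hodd : Odd p) (hm : 0 < m)
    (K N : ℕ) (hK : K = p ^ m) (hN : N = K ^ 2)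
    (F : Type*) [Field F] [Fintype F] [Algebra (ZMod p) F]
    (hcard : Fintype.card F = p ^ m)
    (α : F) (hα : ∀ x : F, x ≠ 0 → ∃ j : ℕ, α ^ j = x)
    (A : Matrix (Fin K) (Fin N) ℂ)
    (hA : ∀ (k : Fin K) (n : Fin N), A k n =
      if (k : ℕ) = 0 then ((Real.sqrt K : ℂ))⁻¹
      else ((Real.sqrt K : ℂ))⁻¹ * addChar p (bOf α ((n : ℕ) % K) * α ^ ((k : ℕ) - 1) +
        bOf α ((n : ℕ) / K) * α ^ (2 * ((k : ℕ) - 1))))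
    :
    A * A.conjTranspose = (K : ℂ) • (1 : Matrix (Fin K) (Fin K) ℂ) ∧
      ‖A‖ ^ 2 = (K : ℝ) :=
  construction1prime_tight_frame_general p m K N hK hN F hcard α hα A hA
end
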